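/- Fix penalties q ∈ ℝ^d with q_j ≥ 0 for all j, fix 0 < a ≤ 1, and let F be a probability measure on ℝ^d. Define G(μ, Σ, F) = ∫_{ℝ^d} g_{μ,Σ}(x) dF(x). Then the map (μ, Σ) ↦ G(μ, Σ, F) is continuous on ℝ^d × 𝒫_a(d), where 𝒫_a(d) is the set of symmetric positive definite d×d matrices with smallest eigenvalue at least a, equipped with the subspace topology of the space of d×d real matrices. -/

import Mathlib

open Matrix

/-- The principal submatrix of `A` with rows and columns in the set `w`. -/
def cellSub {d : ℕ} (A : Matrix (Fin d) (Fin d) ℝ) (w : Finset (Fin d)) :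
    Matrix ↥w ↥w ℝ :=
  A.submatrix (fun i => i.val) (fun i => i.val)

/-- `ℓ_w(x, μ, Σ) = ln det Σ^{(w)} + d^{(w)} ln(2π) + MD²(x, w, μ, Σ) + ∑_j q_j (1 − w_j)`,
where `w` is identified with the subset `{j : w_j = 1}` of the coordinates.
For empty `w` the determinant of the empty submatrix is `1` and the partial
Mahalanobis distance is `0`, matching the stated conventions. -/
noncomputable def cellL {d : ℕ} (q : Fin d → ℝ) (x μ : Fin d → ℝ)
    (A : Matrix (Fin d) (Fin d) ℝ) (w : Finset (Fin d)) : ℝ :=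
  Real.log (cellSub A w).det + (w.card : ℝ) * Real.log (2 * Real.pi)
    + (fun i : ↥w => x i.val - μ i.val) ⬝ᵥ
        ((cellSub A w)⁻¹).mulVec (fun i : ↥w => x i.val - μ i.val)
    + ∑ j ∈ wᶜ, q j

/-- `g_{μ,Σ}(x) = min_{w ∈ {0,1}^d} ℓ_w(x, μ, Σ)`. -/
noncomputable def cellG {d : ℕ} (q : Fin d → ℝ) (μ : Fin d → ℝ)
    (A : Matrix (Fin d) (Fin d) ℝ) (x : Fin d → ℝ) : ℝ :=
  ⨅ w : Finset (Fin d), cellL q x μ A w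

open MeasureTheory

/-! Each of the finitely many terms `cellL q x μ Σ w` is continuous in `(μ, Σ, x)` wherever `Σ` is
positive definite, because principal submatrices of a positive definite matrix are positive
definite; hence so is their minimum `cellG`. The bound `Σ - a • 1 ⪰ 0` passes to principal
submatrices, so `det Σ^{(w)} ≥ a ^ |w|` and `cellG` is bounded below, uniformly in `(μ, Σ, x)`, by
`min_w (|w| log a + ∑_{j ∉ w} q j)`; the empty cell bounds it above by `∑ j, q j`. Dominated
convergence then gives continuity of the integral. -/

namespace Matrix

variable {n : Type*} [Fintype n] [DecidableEq n] {A : Matrix n n ℝ} {a : ℝ}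

lemma posSemidef_sub_smul_one_of_le_dotProduct_mulVec (hA : A.IsHermitian)
    (h : ∀ v : n → ℝ, a * (v ⬝ᵥ v) ≤ v ⬝ᵥ A *ᵥ v) : (A - a • 1).PosSemidef := by
  refine .of_dotProduct_mulVec_nonneg (hA.sub (isHermitian_one.smul (.all a))) fun v => ?_
  have := h v
  simp only [star_trivial, sub_mulVec, smul_mulVec, one_mulVec, dotProduct_sub,
    dotProduct_smul, smul_eq_mul]
  linarith

lemma IsHermitian.le_eigenvalues (hA : A.IsHermitian) (h : (A - a • 1).PosSemidef)
    (i : n) : a ≤ hA.eigenvalues i := by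
  set v := hA.eigenvectorBasis i
  have hv : star ⇑v ⬝ᵥ ⇑v = 1 := by
    rw [dotProduct_comm, ← EuclideanSpace.inner_eq_star_dotProduct,
      real_inner_self_eq_norm_sq, hA.eigenvectorBasis.orthonormal.1 i, one_pow]
  have := h.dotProduct_mulVec_nonneg v
  rw [sub_mulVec, smul_mulVec, one_mulVec, hA.mulVec_eigenvectorBasis, dotProduct_sub,
    dotProduct_smul, dotProduct_smul, hv] at this
  simp only [smul_eq_mul, mul_one] at this
  linarith

lemma IsHermitian.pow_card_le_det (hA : A.IsHermitian) (ha : 0 ≤ a)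
    (h : (A - a • 1).PosSemidef) : a ^ Fintype.card n ≤ A.det := by
  rw [hA.det_eq_prod_eigenvalues, ← Finset.card_univ, ← Finset.prod_const]
  exact Finset.prod_le_prod (fun _ _ => ha) fun i _ => by simpa using hA.le_eigenvalues h i

lemma continuousOn_inv {K : Type*} [Field K] [TopologicalSpace K] [IsTopologicalRing K]
    [ContinuousInv₀ K] :
    ContinuousOn (Inv.inv : Matrix n n K → Matrix n n K) {A | A.det ≠ 0} := fun A hA =>
  (continuousAt_matrix_inv A (by rw [Ring.inverse_eq_inv']; exact continuousAt_inv₀ hA))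
    |>.continuousWithinAt

end Matrix

instance Matrix.firstCountableTopology {m n R : Type*} [Finite m] [Finite n]
    [TopologicalSpace R] [FirstCountableTopology R] : FirstCountableTopology (Matrix m n R) :=
  inferInstanceAs (FirstCountableTopology (m → n → R))

variable {d : ℕ} {q : Fin d → ℝ} {a : ℝ} {A : Matrix (Fin d) (Fin d) ℝ}

lemma cellSub_posDef (hA : A.PosDef) (w : Finset (Fin d)) : (cellSub A w).PosDef :=
  hA.submatrix Subtype.val_injective

lemma cellSub_sub_smul_one_posSemidef (h : (A - a • 1).PosSemidef) (w : Finset (Fin d)) :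
    (cellSub A w - a • 1).PosSemidef := by
  rw [← submatrix_one _ Subtype.val_injective]
  exact h.submatrix _

lemma card_mul_log_le_log_det_cellSub (hA : A.PosDef) (ha : 0 < a)
    (h : (A - a • 1).PosSemidef) (w : Finset (Fin d)) :
    w.card * Real.log a ≤ Real.log (cellSub A w).det := by
  have hdet := (cellSub_posDef hA w).1.pow_card_le_det ha.le (cellSub_sub_smul_one_posSemidef h w)
  rw [Fintype.card_coe] at hdet
  rw [← Real.log_pow]
  exact Real.log_le_log (pow_pos ha _) hdet

lemma card_mul_log_add_sum_compl_le_cellL (hA : A.PosDef) (ha : 0 < a)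
    (h : (A - a • 1).PosSemidef) (x μ : Fin d → ℝ) (w : Finset (Fin d)) :
    w.card * Real.log a + ∑ j ∈ wᶜ, q j ≤ cellL q x μ A w := by
  have hlogdet := card_mul_log_le_log_det_cellSub hA ha h w
  have h2pi : 0 ≤ (w.card : ℝ) * Real.log (2 * Real.pi) :=
    mul_nonneg w.card.cast_nonneg (Real.log_nonneg (by linarith [Real.pi_gt_three]))
  have hquad := (cellSub_posDef hA w).inv.posSemidef.dotProduct_mulVec_nonneg
    (fun i : w => x i - μ i)
  rw [star_trivial] at hquad
  unfold cellL
  linarith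

section Continuity

variable {X : Type*} [TopologicalSpace X] {s : Set X} {μ x : X → Fin d → ℝ}
  {S : X → Matrix (Fin d) (Fin d) ℝ}

lemma continuousOn_cellL (q : Fin d → ℝ) (w : Finset (Fin d)) (hμ : Continuous μ)
    (hS : Continuous S) (hx : Continuous x) (hpd : ∀ p ∈ s, (S p).PosDef) :
    ContinuousOn (fun p => cellL q (x p) (μ p) (S p) w) s := by
  have hsub : Continuous fun p => cellSub (S p) w := hS.matrix_submatrix _ _
  have hdet : ∀ p ∈ s, (cellSub (S p) w).det ≠ 0 := fun p hp =>
    (cellSub_posDef (hpd p hp) w).det_pos.ne'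
  have hinv : ContinuousOn (fun p => (cellSub (S p) w)⁻¹) s :=
    Matrix.continuousOn_inv.comp hsub.continuousOn hdet
  have hres : Continuous fun p => fun i : w => x p i - μ p i := by fun_prop
  have hquad : Continuous fun z : (w → ℝ) × Matrix w w ℝ => z.1 ⬝ᵥ z.2 *ᵥ z.1 :=
    continuous_fst.dotProduct (continuous_snd.matrix_mulVec continuous_fst)
  unfold cellL
  exact (((hsub.matrix_det.continuousOn.log hdet).add continuousOn_const).add
    (hquad.comp_continuousOn (hres.continuousOn.prodMk hinv))).add continuousOn_const

lemma continuousOn_cellG (q : Fin d → ℝ) (hμ : Continuous μ) (hS : Continuous S)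
    (hx : Continuous x) (hpd : ∀ p ∈ s, (S p).PosDef) :
    ContinuousOn (fun p => cellG q (μ p) (S p) (x p)) s := by
  simp only [cellG, ← Finset.inf'_univ_eq_ciInf]
  exact .finset_inf'_apply Finset.univ_nonempty fun w _ => continuousOn_cellL q w hμ hS hx hpd

end Continuity

lemma iInf_card_mul_log_add_sum_compl_le_cellG (q : Fin d → ℝ) (hA : A.PosDef) (ha : 0 < a)
    (h : (A - a • 1).PosSemidef) (μ x : Fin d → ℝ) :
    ⨅ w : Finset (Fin d), (w.card * Real.log a + ∑ j ∈ wᶜ, q j) ≤ cellG q μ A x :=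
  ciInf_mono (Set.finite_range _).bddBelow (card_mul_log_add_sum_compl_le_cellL hA ha h x μ)

lemma cellG_le_sum (q μ : Fin d → ℝ) (A : Matrix (Fin d) (Fin d) ℝ) (x : Fin d → ℝ) :
    cellG q μ A x ≤ ∑ j, q j := by
  refine (ciInf_le (Set.finite_range _).bddBelow ∅).trans_eq ?_
  simp [cellL, dotProduct]

theorem stmt_18_general {d : ℕ} (q : Fin d → ℝ)
    (a : ℝ) (ha0 : 0 < a)
    (F : Measure (Fin d → ℝ)) [IsProbabilityMeasure F] :
    ContinuousOn
      (fun p : (Fin d → ℝ) × Matrix (Fin d) (Fin d) ℝ =>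
        ∫ x, cellG q p.1 p.2 x ∂F)
      (Set.univ ×ˢ {A : Matrix (Fin d) (Fin d) ℝ | A.PosDef ∧
        ∀ v : Fin d → ℝ, a * (v ⬝ᵥ v) ≤ v ⬝ᵥ A.mulVec v}) := by
  set lower := ⨅ w : Finset (Fin d), (w.card * Real.log a + ∑ j ∈ wᶜ, q j)
  refine continuousOn_of_dominated (bound := fun _ => |lower| + |∑ j, q j|) ?_ ?_
    (integrable_const _) ?_
  · rintro p ⟨-, hA, -⟩
    refine (continuousOn_univ.mp ?_).aestronglyMeasurable
    exact continuousOn_cellG q continuous_const continuous_const continuous_id fun _ _ => hA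
  · rintro p ⟨-, hA, hray⟩
    have hpsd := Matrix.posSemidef_sub_smul_one_of_le_dotProduct_mulVec hA.1 hray
    refine ae_of_all _ fun x => abs_le.2 ⟨?_, ?_⟩
    · linarith [neg_abs_le lower, abs_nonneg (∑ j, q j),
        iInf_card_mul_log_add_sum_compl_le_cellG q hA ha0 hpsd p.1 x]
    · linarith [le_abs_self (∑ j, q j), abs_nonneg lower, cellG_le_sum q p.1 p.2 x]
  · exact ae_of_all _ fun x =>
      continuousOn_cellG q continuous_fst continuous_snd continuous_const fun _ hp => hp.2.1

/-- For nonnegative penalties, `0 < a ≤ 1` and a probability measure `F` on `ℝ^d`,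
the map `(μ, Σ) ↦ G(μ, Σ, F) = ∫ g_{μ,Σ}(x) dF(x)` is continuous on
`ℝ^d × 𝒫_a(d)`, where `𝒫_a(d)` is the set of symmetric positive definite
`d×d` matrices with smallest eigenvalue at least `a` (Rayleigh-quotient form). -/
theorem stmt_18 {d : ℕ} (q : Fin d → ℝ) (hq : ∀ j, 0 ≤ q j)
    (a : ℝ) (ha0 : 0 < a) (ha1 : a ≤ 1)
    (F : Measure (Fin d → ℝ)) [IsProbabilityMeasure F] :
    ContinuousOn
      (fun p : (Fin d → ℝ) × Matrix (Fin d) (Fin d) ℝ =>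
        ∫ x, cellG q p.1 p.2 x ∂F)
      (Set.univ ×ˢ {A : Matrix (Fin d) (Fin d) ℝ | A.PosDef ∧
        ∀ v : Fin d → ℝ, a * (v ⬝ᵥ v) ≤ v ⬝ᵥ A.mulVec v}) :=
  stmt_18_general q a ha0 F
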